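/- arXiv:2011.01192 — 3 statements merged into one kernel-verified Lean document; each statement's English description precedes it below -/
import Mathlib

section
/- For any matrix W and any full-rank matrix A such that the linear system BA = W is satisfiable, the Frobenius norm of W times the Moore-Penrose pseudoinverse of (DA) is at most the Frobenius norm of W times the pseudoinverse of A, where D is a diagonal matrix with all diagonal entries at least 1. -/
open Matrix BigOperators

/-- Frobenius norm of a real matrix. -/
noncomputable def frob {m n : Type*} [Fintype m] [Fintype n] (M : Matrix m n ℝ) : ℝ :=
  Real.sqrt (∑ i, ∑ j, (M i j) ^ 2)

/-- `P` is the Moore-Penrose pseudoinverse of `A` (the four Penrose conditions). -/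
def IsMPInv {k n : Type*} [Fintype k] [Fintype n] (A : Matrix k n ℝ) (P : Matrix n k ℝ) : Prop :=
  A * P * A = A ∧ P * A * P = P ∧ (A * P)ᵀ = A * P ∧ (P * A)ᵀ = P * A

lemma idem_full {k : Type*} [Fintype k] [DecidableEq k] (M : Matrix k k ℝ)
    (hi : M * M = M) (hr : M.rank = Fintype.card k) : M = 1 := by
  have hsurj : LinearMap.range M.mulVecLin = ⊤ := by
    apply Submodule.eq_top_of_finrank_eq
    rw [← Matrix.rank, hr, Module.finrank_pi]
  have hfix : ∀ v : k → ℝ, M.mulVec v = v := by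
    intro v
    obtain ⟨u, hu⟩ := LinearMap.range_eq_top.mp hsurj v
    have hu' : M.mulVec u = v := hu
    rw [← hu', Matrix.mulVec_mulVec, hi]
  ext i j
  have := congrFun (hfix (Pi.single j 1)) i
  simpa [Matrix.mulVec_single, Matrix.one_apply, Pi.single_apply, eq_comm] using this

theorem stmt0 {m k n : Type*} [Fintype m] [Fintype k] [Fintype n] [DecidableEq k]
    (W : Matrix m n ℝ) (A : Matrix k n ℝ) (Ap : Matrix n k ℝ) (DAp : Matrix n k ℝ)
    (d : k → ℝ) (hd : ∀ i, 1 ≤ d i)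
    (hrank : A.rank = Fintype.card k)
    (hsat : ∃ B : Matrix m k ℝ, B * A = W)
    (hAp : IsMPInv A Ap)
    (hDAp : IsMPInv (Matrix.diagonal d * A) DAp) :
    frob (W * DAp) ≤ frob (W * Ap) := by
  obtain ⟨B, hB⟩ := hsat
  have hdne : ∀ i, d i ≠ 0 := fun i => by have := hd i; positivity
  set Dinv : Matrix k k ℝ := Matrix.diagonal (fun i => (d i)⁻¹) with hDinv
  have hDD : Dinv * Matrix.diagonal d = 1 := by
    rw [hDinv, Matrix.diagonal_mul_diagonal]
    simp [inv_mul_cancel₀, hdne]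
  -- A * Ap = 1
  have hAAp : A * Ap = 1 := by
    apply idem_full
    · rw [← Matrix.mul_assoc, hAp.1]
    · refine le_antisymm (Matrix.rank_le_card_height _) ?_
      calc Fintype.card k = A.rank := hrank.symm
        _ = (A * Ap * A).rank := by rw [hAp.1]
        _ ≤ (A * Ap).rank := Matrix.rank_mul_le_left _ _
  -- rank of D*A
  have hrank2 : (Matrix.diagonal d * A).rank = Fintype.card k := by
    refine le_antisymm (Matrix.rank_le_card_height _) ?_
    calc Fintype.card k = A.rank := hrank.symm
      _ = (Dinv * (Matrix.diagonal d * A)).rank := by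
          rw [← Matrix.mul_assoc, hDD, Matrix.one_mul]
      _ ≤ (Matrix.diagonal d * A).rank := Matrix.rank_mul_le_right _ _
  have hDAAp : (Matrix.diagonal d * A) * DAp = 1 := by
    apply idem_full
    · rw [← Matrix.mul_assoc, hDAp.1]
    · refine le_antisymm (Matrix.rank_le_card_height _) ?_
      calc Fintype.card k = (Matrix.diagonal d * A).rank := hrank2.symm
        _ = ((Matrix.diagonal d * A) * DAp * (Matrix.diagonal d * A)).rank := by rw [hDAp.1]
        _ ≤ ((Matrix.diagonal d * A) * DAp).rank := Matrix.rank_mul_le_left _ _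
  have h1 : W * Ap = B := by
    rw [← hB, Matrix.mul_assoc, hAAp, Matrix.mul_one]
  have h2 : W * DAp = B * Dinv := by
    have hA : A = Dinv * (Matrix.diagonal d * A) := by
      rw [← Matrix.mul_assoc, hDD, Matrix.one_mul]
    rw [← hB, Matrix.mul_assoc, hA, Matrix.mul_assoc, hDAAp, Matrix.mul_one]
  rw [h1, h2]
  unfold frob
  apply Real.sqrt_le_sqrt
  apply Finset.sum_le_sum
  intro i _
  apply Finset.sum_le_sum
  intro j _
  have : (B * Dinv) i j = B i j * (d j)⁻¹ := by
    rw [hDinv, Matrix.mul_diagonal]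
  rw [this, mul_pow]
  have h1d : (d j)⁻¹ ≤ 1 := by
    rw [inv_le_one_iff₀]; right; exact hd j
  have h0d : (0:ℝ) ≤ (d j)⁻¹ := inv_nonneg.mpr (le_trans zero_le_one (hd j))
  have hc2 : ((d j)⁻¹) ^ 2 ≤ 1 := by nlinarith
  nlinarith [mul_nonneg (sq_nonneg (B i j)) (sub_nonneg.mpr hc2)]
end

section
/- Appending additional rows to a strategy matrix cannot increase the Frobenius norm of the workload times the pseudoinverse: if à is the vertical stack of A and C, and W is expressible as a linear combination of the rows of A, then ‖WÃ⁺‖_F ≤ ‖WA⁺‖_F. -/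
open Matrix BigOperators

/-- Squared Frobenius norm. -/
noncomputable def sqf {m n : Type*} [Fintype m] [Fintype n] (M : Matrix m n ℝ) : ℝ :=
  ∑ i, ∑ j, (M i j) ^ 2

lemma sqf_nonneg {m n : Type*} [Fintype m] [Fintype n] (M : Matrix m n ℝ) : 0 ≤ sqf M := by
  apply Finset.sum_nonneg; intro i _
  apply Finset.sum_nonneg; intro j _
  positivity

lemma sqf_trace {m n : Type*} [Fintype m] [Fintype n] (M : Matrix m n ℝ) :
    sqf M = Matrix.trace (M * Mᵀ) := by
  simp [sqf, Matrix.trace, Matrix.mul_apply, Matrix.diag, sq]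

lemma sqf_mul_proj {m n : Type*} [Fintype m] [Fintype n] (Y : Matrix m n ℝ)
    (Q : Matrix n n ℝ) (hQt : Qᵀ = Q) (hQQ : Q * Q = Q) :
    sqf (Y * Q) ≤ sqf Y := by
  have e1 : (Y * Q) * (Y * Q)ᵀ = Y * Q * Yᵀ := by
    rw [transpose_mul, hQt, ← Matrix.mul_assoc, Matrix.mul_assoc Y Q Q, hQQ]
  have e2 : (Y - Y * Q) * (Y - Y * Q)ᵀ = Y * Yᵀ - Y * Q * Yᵀ := by
    rw [transpose_sub, transpose_mul, hQt, Matrix.sub_mul, Matrix.mul_sub, Matrix.mul_sub,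
      ← Matrix.mul_assoc Y Q Yᵀ, ← Matrix.mul_assoc (Y * Q) Q Yᵀ, Matrix.mul_assoc Y Q Q, hQQ]
    abel
  have key : sqf Y - sqf (Y * Q) = sqf (Y - Y * Q) := by
    rw [sqf_trace, sqf_trace, sqf_trace, e1, e2, Matrix.trace_sub]
  nlinarith [sqf_nonneg (Y - Y * Q)]

theorem stmt1 {m k p n : Type*} [Fintype m] [Fintype k] [Fintype p] [Fintype n]
    (W : Matrix m n ℝ) (A : Matrix k n ℝ) (C : Matrix p n ℝ)
    (Ap : Matrix n k ℝ) (Atp : Matrix n (k ⊕ p) ℝ)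
    (hAp : IsMPInv A Ap) (hW : W * Ap * A = W)
    (hAtp : IsMPInv (Matrix.fromRows A C) Atp) :
    frob (W * Atp) ≤ frob (W * Ap) := by
  set At := Matrix.fromRows A C with hAt
  set Q := At * Atp with hQ
  have hQt : Qᵀ = Q := hAtp.2.2.1
  have hQQ : Q * Q = Q := by
    rw [hQ, ← Matrix.mul_assoc, hAtp.1]
  set Y : Matrix m (k ⊕ p) ℝ := Matrix.fromCols (W * Ap) 0 with hY
  have hYA : Y * At = W * Ap * A := by
    rw [hY, hAt, Matrix.fromCols_mul_fromRows, Matrix.zero_mul, add_zero]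
  have hWAtp : W * Atp = Y * Q := by
    rw [hQ, ← Matrix.mul_assoc, hYA, hW]
  have hsqfY : sqf Y = sqf (W * Ap) := by
    simp [sqf, hY, Fintype.sum_sum_type, Matrix.fromCols]
  have h := sqf_mul_proj Y Q hQt hQQ
  rw [hsqfY, ← hWAtp] at h
  exact Real.sqrt_le_sqrt h
end

section
/- Combining the diagonal-scaling and row-addition lemmas: if A has full row rank, W satisfies WA⁺A = W, D is diagonal with entries ≥ 1, and à = [A; C] is A with extra rows appended, then ‖W(DÃ')⁺‖_F ≤ ‖WA⁺‖_F, where D is a diagonal matrix of size matching à with all diagonal entries ≥ 1. In particular, under the matrix mechanism with fixed per-query noise scale, an analyst's expected error cannot increase when the strategy matrix is modified by scaling rows up and adding rows. -/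
open Matrix BigOperators

/-!
Write `B = D [A; C]`. The Penrose conditions make `B B⁺` an orthogonal projection, so for every
`Z` with `Z B = W` we get `‖W B⁺‖ = ‖Z (B B⁺)‖ ≤ ‖Z‖`: the pseudoinverse yields the minimum-norm
solution. Since `W A⁺ A = W`, the choice `Z = [W A⁺, 0] D⁻¹` solves `Z B = W`, and as `D ≥ 1`
its norm is at most `‖W A⁺‖`.
-/

section Frobenius

variable {m n r : Type*} [Fintype m] [Fintype n] [Fintype r]

lemma frob_eq_sqrt_trace (M : Matrix m n ℝ) : frob M = √(trace (M * Mᵀ)) := by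
  simp [frob, trace, mul_apply, sq]

lemma trace_mul_transpose_self_nonneg (M : Matrix m n ℝ) : 0 ≤ trace (M * Mᵀ) := by
  simpa [trace, mul_apply] using
    Finset.sum_nonneg fun i _ => Finset.sum_nonneg fun j _ => mul_self_nonneg (M i j)

lemma frob_mul_le_of_transpose_eq_of_mul_self_eq {Q : Matrix n n ℝ} (hQ : Qᵀ = Q)
    (hQQ : Q * Q = Q) (Z : Matrix m n ℝ) : frob (Z * Q) ≤ frob Z := by
  classical
  have hQQt : Q * Qᵀ = Q := by rw [hQ, hQQ]
  have hRRt : (1 - Q) * (1 - Q)ᵀ = 1 - Q := by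
    rw [transpose_sub, transpose_one, hQ, sub_mul, mul_sub, mul_sub, hQQ]
    simp
  have hpyth : Z * Zᵀ = Z * Q * (Z * Q)ᵀ + Z * (1 - Q) * (Z * (1 - Q))ᵀ := by
    simp only [transpose_mul, ← Matrix.mul_assoc]
    rw [Matrix.mul_assoc Z Q, hQQt, Matrix.mul_assoc Z (1 - Q), hRRt, ← Matrix.add_mul,
      ← Matrix.mul_add, add_sub_cancel, Matrix.mul_one]
  rw [frob_eq_sqrt_trace, frob_eq_sqrt_trace, hpyth, trace_add]
  exact Real.sqrt_le_sqrt (le_add_of_nonneg_right (trace_mul_transpose_self_nonneg _))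

lemma frob_mul_le_of_mul_eq {B : Matrix r n ℝ} {P : Matrix n r ℝ} (hBPB : B * P * B = B)
    (hBP : (B * P)ᵀ = B * P) {W : Matrix m n ℝ} {Z : Matrix m r ℝ} (hZ : Z * B = W) :
    frob (W * P) ≤ frob Z := by
  subst hZ
  rw [Matrix.mul_assoc]
  refine frob_mul_le_of_transpose_eq_of_mul_self_eq hBP ?_ Z
  rw [← Matrix.mul_assoc, hBPB]

lemma frob_mul_diagonal_le [DecidableEq n] (M : Matrix m n ℝ) {e : n → ℝ}
    (he : ∀ j, |e j| ≤ 1) : frob (M * diagonal e) ≤ frob M := by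
  refine Real.sqrt_le_sqrt (Finset.sum_le_sum fun i _ => Finset.sum_le_sum fun j _ => ?_)
  rw [mul_diagonal, mul_pow]
  exact mul_le_of_le_one_right (sq_nonneg _) (sq_le_one_iff_abs_le_one _ |>.mpr (he j))

lemma frob_fromCols_zero (M : Matrix m n ℝ) : frob (fromCols M (0 : Matrix m r ℝ)) = frob M := by
  simp [frob, Fintype.sum_sum_type]

end Frobenius

theorem stmt8_general {m k p n : Type*} [Fintype m] [Fintype k] [Fintype p] [Fintype n]
    [DecidableEq (k ⊕ p)]
    (W : Matrix m n ℝ) (A : Matrix k n ℝ) (C : Matrix p n ℝ) (Ap : Matrix n k ℝ)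
    (d : k ⊕ p → ℝ) (hd : ∀ i, 1 ≤ d i) (P : Matrix n (k ⊕ p) ℝ)
    (hW : W * Ap * A = W)
    (hP : IsMPInv (Matrix.diagonal d * Matrix.fromRows A C) P) :
    frob (W * P) ≤ frob (W * Ap) := by
  set Z := fromCols (W * Ap) (0 : Matrix m p ℝ) * diagonal d⁻¹
  have hZ : Z * (diagonal d * fromRows A C) = W := by
    have hdd : diagonal d⁻¹ * diagonal d = 1 := by
      rw [diagonal_mul_diagonal, ← diagonal_one]
      exact congrArg diagonal (funext fun i => inv_mul_cancel₀ (by linarith [hd i]))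
    rw [Matrix.mul_assoc, ← Matrix.mul_assoc (diagonal _), hdd, Matrix.one_mul,
      fromCols_mul_fromRows, Matrix.zero_mul, add_zero, hW]
  have hZle : frob Z ≤ frob (W * Ap) := by
    refine (frob_mul_diagonal_le _ fun i => ?_).trans_eq (frob_fromCols_zero _)
    rw [Pi.inv_apply, abs_inv, abs_of_pos (by linarith [hd i])]
    exact inv_le_one_of_one_le₀ (hd i)
  exact (frob_mul_le_of_mul_eq hP.1 hP.2.2.1 hZ).trans hZle

theorem stmt8 {m k p n : Type*} [Fintype m] [Fintype k] [Fintype p] [Fintype n]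
    [DecidableEq (k ⊕ p)]
    (W : Matrix m n ℝ) (A : Matrix k n ℝ) (C : Matrix p n ℝ) (Ap : Matrix n k ℝ)
    (d : k ⊕ p → ℝ) (hd : ∀ i, 1 ≤ d i) (P : Matrix n (k ⊕ p) ℝ)
    (hAp : IsMPInv A Ap) (hW : W * Ap * A = W)
    (hP : IsMPInv (Matrix.diagonal d * Matrix.fromRows A C) P) :
    frob (W * P) ≤ frob (W * Ap) :=
  stmt8_general W A C Ap d hd P hW hP
end
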